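/- Let L1 ⊆ X1* be star-free over alphabet X1 and let X2 be a disjoint alphabet. Then the shuffle language L1' = { w_0 x_1 w_1 ⋯ x_n w_n : w_i ∈ X2*, x_1⋯x_n ∈ L1 } is star-free over X1 ∪ X2. -/

import Mathlib

/-- Star-free languages over an alphabet `A`: the closure of the finite
languages under concatenation, union, intersection, and complementation. -/
inductive StarFree {A : Type*} : Language A → Prop
  | finite (L : Language A) : L.Finite → StarFree L
  | concat (L₁ L₂ : Language A) : StarFree L₁ → StarFree L₂ → StarFree (L₁ * L₂)
  | union (L₁ L₂ : Language A) : StarFree L₁ → StarFree L₂ → StarFree (L₁ ⊔ L₂)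
  | inter (L₁ L₂ : Language A) : StarFree L₁ → StarFree L₂ → StarFree (L₁ ⊓ L₂)
  | compl (L : Language A) : StarFree L → StarFree Lᶜ

/-!
Let `π : (X₁ ⊕ X₂)* → X₁*` erase the letters of `X₂`; the language in question is `π⁻¹ L₁`.
Taking preimages under `π` commutes with the Boolean operations, and also with concatenation,
because every factorization `π w = u v` lifts to a factorization `w = w₁ w₂` with `π w₁ = u`,
`π w₂ = v`. By induction on the star-free construction of `L₁` it therefore suffices to treat
finite languages, hence single words. For these,
`π⁻¹ {x₁ ⋯ xₙ} = X₂* x₁ X₂* ⋯ xₙ X₂*`, and `X₂*` is star-free as the complement of the finite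
union of the languages `A* x A*`, `x ∈ X₁`, where `A = X₁ ⊕ X₂`.
-/

namespace StarFree

variable {A : Type*}

theorem bot : StarFree (⊥ : Language A) :=
  .finite ⊥ Set.finite_empty

theorem top : StarFree (⊤ : Language A) := by
  simpa using StarFree.compl ⊥ bot

theorem singleton (u : List A) : StarFree ({u} : Language A) :=
  .finite _ (Set.finite_singleton u)

theorem iSup {ι : Type*} [Finite ι] {L : ι → Language A} (h : ∀ i, StarFree (L i)) :
    StarFree (⨆ i, L i) := by
  have := Fintype.ofFinite ι
  rw [← Finset.sup_univ_eq_iSup]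
  exact Finset.sup_induction bot (fun _ h₁ _ h₂ => .union _ _ h₁ h₂) fun i _ => h i

end StarFree

namespace Language

theorem mem_singleton {α : Type*} {w u : List α} : w ∈ ({u} : Language α) ↔ w = u :=
  Iff.rfl

theorem mem_compl {α : Type*} {w : List α} {L : Language α} : w ∈ Lᶜ ↔ w ∉ L :=
  Iff.rfl

variable {X₁ : Type*} (X₂ : Type*)

/-- The paper's `L₁'`: the words over `X₁ ⊕ X₂` whose `X₁`-letters spell a word of `L`. -/
def comapLeft (L : Language X₁) : Language (X₁ ⊕ X₂) :=
  {w | w.filterMap Sum.getLeft? ∈ L}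

variable {X₂}

theorem mem_comapLeft {L : Language X₁} {w : List (X₁ ⊕ X₂)} :
    w ∈ comapLeft X₂ L ↔ w.filterMap Sum.getLeft? ∈ L :=
  Iff.rfl

theorem comapLeft_sup (L M : Language X₁) :
    comapLeft X₂ (L ⊔ M) = comapLeft X₂ L ⊔ comapLeft X₂ M :=
  rfl

theorem comapLeft_inf (L M : Language X₁) :
    comapLeft X₂ (L ⊓ M) = comapLeft X₂ L ⊓ comapLeft X₂ M :=
  rfl

theorem comapLeft_compl (L : Language X₁) : comapLeft X₂ Lᶜ = (comapLeft X₂ L)ᶜ :=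
  rfl

theorem comapLeft_mul (L M : Language X₁) :
    comapLeft X₂ (L * M) = comapLeft X₂ L * comapLeft X₂ M := by
  ext w
  simp only [mem_comapLeft, mem_mul]
  constructor
  · rintro ⟨u, hu, v, hv, huv⟩
    obtain ⟨w₁, w₂, rfl, rfl, rfl⟩ := List.filterMap_eq_append_iff.mp huv.symm
    exact ⟨w₁, hu, w₂, hv, rfl⟩
  · rintro ⟨w₁, h₁, w₂, h₂, rfl⟩
    exact ⟨_, h₁, _, h₂, List.filterMap_append.symm⟩

theorem comapLeft_singleton_nil :
    comapLeft X₂ {([] : List X₁)} = (⨆ x : X₁, ⊤ * {[Sum.inl x]} * ⊤)ᶜ := by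
  ext w
  simp only [mem_comapLeft, mem_singleton, List.filterMap_eq_nil_iff, mem_compl,
    mem_iSup, mem_mul, not_exists, not_and]
  constructor
  · rintro hw x _ ⟨s, -, _, rfl, rfl⟩ t - rfl
    simpa using hw (Sum.inl x)
  · rintro hw (x | y) hmem
    · obtain ⟨s, t, rfl⟩ := List.append_of_mem hmem
      exact (hw x _ ⟨s, trivial, _, rfl, rfl⟩ t trivial (by simp)).elim
    · rfl

theorem comapLeft_singleton_cons (x : X₁) (u : List X₁) :
    comapLeft X₂ {x :: u} = comapLeft X₂ {[]} * {[Sum.inl x]} * comapLeft X₂ {u} := by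
  ext w
  simp only [mem_comapLeft, mem_singleton, mem_mul, List.filterMap_eq_cons_iff,
    List.filterMap_eq_nil_iff]
  constructor
  · rintro ⟨w₁, (y | y), w₂, rfl, h₁, hy, h₂⟩
    · obtain rfl : y = x := by simpa using hy
      exact ⟨w₁ ++ [Sum.inl y], ⟨w₁, h₁, _, rfl, rfl⟩, w₂, h₂, by simp⟩
    · simp at hy
  · rintro ⟨_, ⟨w₁, h₁, _, rfl, rfl⟩, w₂, h₂, rfl⟩
    exact ⟨w₁, Sum.inl x, w₂, by simp, h₁, rfl, h₂⟩

end Language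

namespace StarFree

open Language

variable {X₁ X₂ : Type*} [Finite X₁]

theorem comapLeft_singleton (u : List X₁) : StarFree (comapLeft X₂ {u}) := by
  have nil : StarFree (comapLeft X₂ {([] : List X₁)}) := by
    rw [comapLeft_singleton_nil]
    exact .compl _ <| .iSup fun x => .concat _ _ (.concat _ _ top (singleton _)) top
  induction u with
  | nil => exact nil
  | cons x u ih =>
    rw [comapLeft_singleton_cons]
    exact .concat _ _ (.concat _ _ nil (singleton _)) ih

theorem comapLeft_of_finite {L : Language X₁} (hL : L.Finite) :
    StarFree (comapLeft X₂ L) := by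
  induction L, hL using Set.Finite.induction_on with
  | empty => exact .finite _ Set.finite_empty
  -- `insert u L` unfolds to `{u} ⊔ L`
  | insert _ _ ih => exact .union _ _ (comapLeft_singleton _) ih

theorem comapLeft {L : Language X₁} (h : StarFree L) :
    StarFree (Language.comapLeft X₂ L) := by
  induction h with
  | finite L hL => exact comapLeft_of_finite hL
  | concat L M _ _ ihL ihM => rw [comapLeft_mul]; exact .concat _ _ ihL ihM
  | union L M _ _ ihL ihM => rw [comapLeft_sup]; exact .union _ _ ihL ihM
  | inter L M _ _ ihL ihM => rw [comapLeft_inf]; exact .inter _ _ ihL ihM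
  | compl L _ ih => rw [comapLeft_compl]; exact .compl _ ih

end StarFree

theorem stmt14_general {X₁ X₂ : Type*} [Fintype X₁] (L₁ : Language X₁)
    (h : StarFree L₁) :
    StarFree {w : List (X₁ ⊕ X₂) | w.filterMap Sum.getLeft? ∈ L₁} :=
  h.comapLeft

/-- If `L₁ ⊆ X₁*` is star-free, then the shuffle of `L₁` with arbitrary words
over a disjoint alphabet `X₂` is star-free over `X₁ ⊕ X₂`: this shuffle is the
set of words whose subsequence of `X₁`-letters lies in `L₁`. -/
theorem stmt14 {X₁ X₂ : Type*} [Fintype X₁] [Fintype X₂] (L₁ : Language X₁)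
    (h : StarFree L₁) :
    StarFree {w : List (X₁ ⊕ X₂) | w.filterMap Sum.getLeft? ∈ L₁} :=
  stmt14_general L₁ h
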